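/- Suppose there exists a sequence (x_m)_{m∈ℕ} ⊂ X such that N(x_m)/(M₁(x_m))² → 0 as m → ∞, where N(x) := ∑_{y≠x} k(x,y)k(y,x). Then there does not exist any n ∈ [1,∞) such that L satisfies CD_Υ(0,n). -/

import Mathlib

open Real Filter MeasureTheory Set

/-- `Υ(r) = e^r - r - 1`. -/
noncomputable def Ups (r : ℝ) : ℝ := Real.exp r - r - 1

/-- `M₁(x) = ∑_{y ≠ x} k(x,y)`. -/
noncomputable def M1fn {X : Type*} (k : X → X → ℝ) (x : X) : ℝ :=
  ∑' y : {y : X // y ≠ x}, k x y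

/-- The Markov generator `L f(x) = ∑_y k(x,y)(f(y) - f(x))`. -/
noncomputable def genOp {X : Type*} (k : X → X → ℝ) (f : X → ℝ) (x : X) : ℝ :=
  ∑' y, k x y * (f y - f x)

/-- `Ψ_Υ(f)(x) = ∑_y k(x,y) Υ(f(y) - f(x))`. -/
noncomputable def psiUps {X : Type*} (k : X → X → ℝ) (f : X → ℝ) (x : X) : ℝ :=
  ∑' y, k x y * Ups (f y - f x)

/-- `B_{Υ'}(f,g)(x) = ∑_y k(x,y) Υ'(f(y)-f(x)) (g(y)-g(x))`. -/
noncomputable def bUps {X : Type*} (k : X → X → ℝ) (f g : X → ℝ) (x : X) : ℝ :=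
  ∑' y, k x y * (Real.exp (f y - f x) - 1) * (g y - g x)

/-- `Ψ_{2,Υ}(f) = (1/2)(L Ψ_Υ(f) - B_{Υ'}(f, L f))`. -/
noncomputable def psi2Ups {X : Type*} (k : X → X → ℝ) (f : X → ℝ) (x : X) : ℝ :=
  (1/2) * (genOp k (psiUps k f) x - bUps k f (genOp k f) x)

/-- Boundedness of a real-valued function on the state space. -/
def BddFun {X : Type*} (f : X → ℝ) : Prop := ∃ B : ℝ, ∀ x, |f x| ≤ B

/-- The standing assumptions on the transition rates: nonnegative off-diagonal rates,
`M₁(x) < ∞` (summability), `k(x,x) = -M₁(x)`, and `M₂(x) < ∞`. -/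
def KernelSetting {X : Type*} (k : X → X → ℝ) : Prop :=
  (∀ x y, x ≠ y → 0 ≤ k x y) ∧
  (∀ x : X, Summable fun y : {y : X // y ≠ x} => k x y) ∧
  (∀ x : X, k x x = -M1fn k x) ∧
  (∀ x : X, Summable fun y : {y : X // y ≠ x} => k x y * M1fn k y)

/-- A CD-function: continuous and nonnegative on `[0,∞)` with `F(0) = 0`, `F(r)/r`
strictly increasing on `(0,∞)` and `1/F` integrable at `∞`. -/
def IsCDFunction (F : ℝ → ℝ) : Prop :=
  ContinuousOn F (Ici 0) ∧ F 0 = 0 ∧ (∀ r : ℝ, 0 ≤ r → 0 ≤ F r) ∧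
  StrictMonoOn (fun r => F r / r) (Ioi 0) ∧
  ∃ c : ℝ, 0 < c ∧ IntegrableOn (fun r => 1 / F r) (Ioi c)

/-- The trivial extension `F₀` of `F : [0,∞) → [0,∞)` by `0` on `(-∞,0)`. -/
noncomputable def trivExt (F : ℝ → ℝ) : ℝ → ℝ := fun r => if 0 ≤ r then F r else 0

/-- The condition `CD_Υ(κ,F)` at a point `x`. -/
def CDUpsAt {X : Type*} (k : X → X → ℝ) (κ : ℝ) (F : ℝ → ℝ) (x : X) : Prop :=
  ∀ f : X → ℝ, BddFun f →
    κ * psiUps k f x + trivExt F (-genOp k f x) ≤ psi2Ups k f x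

/-- The condition `CD_Υ(κ,F)` (at every point). -/
def CDUps {X : Type*} (k : X → X → ℝ) (κ : ℝ) (F : ℝ → ℝ) : Prop :=
  ∀ x : X, CDUpsAt k κ F x

/-- `N(x) = ∑_{y ≠ x} k(x,y)k(y,x)`. -/
noncomputable def Nfn {X : Type*} (k : X → X → ℝ) (x : X) : ℝ :=
  ∑' y : {y : X // y ≠ x}, k x y * k y x

/-
Test the curvature-dimension inequality at `x₀` on the bump `f = c · 1_{x₀}`. Everything is
explicit in `M = M₁(x₀)` and `N = N(x₀)`, and `CD_Υ(0,n)` becomes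
`(2c²/n - 1 + (1 + c) e^{-c}) M² ≤ (e^c - 1 - c e^{-c}) N`. For `c = √(2n)` the left coefficient
exceeds `3`, so `N(x)/M₁(x)²` is bounded below by a positive constant depending only on `n`,
contradicting `N(x_m)/M₁(x_m)² → 0`.
-/

section Bump

variable {X : Type*} {k : X → X → ℝ}

lemma Ups_zero : Ups 0 = 0 := by simp [Ups]

lemma exp_sub_one_sub_mul_exp_neg_pos {c : ℝ} (hc : 0 < c) :
    0 < exp c - 1 - c * exp (-c) := by
  have h₁ : c + 1 < exp c := add_one_lt_exp hc.ne'
  have h₂ : exp (-c) < 1 := exp_lt_one_iff.mpr (neg_neg_iff_pos.mpr hc)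
  nlinarith

lemma tsum_eq_tsum_ne_of_eq_zero {x₀ : X} {g : X → ℝ} (h : g x₀ = 0) :
    ∑' y, g y = ∑' y : {y : X // y ≠ x₀}, g y :=
  (tsum_subtype_eq_of_support_subset (s := {y | y ≠ x₀}) fun _ hy hyx => hy (hyx ▸ h)).symm

lemma M1fn_nonneg (hnn : ∀ x y, x ≠ y → 0 ≤ k x y) (x₀ : X) : 0 ≤ M1fn k x₀ :=
  tsum_nonneg fun y => hnn x₀ y (Ne.symm y.2)

lemma le_M1fn (hnn : ∀ x y, x ≠ y → 0 ≤ k x y)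
    (hsum : ∀ x : X, Summable fun y : {y : X // y ≠ x} => k x y) {x₀ y : X} (h : y ≠ x₀) :
    k y x₀ ≤ M1fn k y :=
  (hsum y).le_tsum ⟨x₀, Ne.symm h⟩ fun b _ => hnn y b (Ne.symm b.2)

lemma summable_mul_swap (hnn : ∀ x y, x ≠ y → 0 ≤ k x y)
    (hsum : ∀ x : X, Summable fun y : {y : X // y ≠ x} => k x y)
    (hsum₂ : ∀ x : X, Summable fun y : {y : X // y ≠ x} => k x y * M1fn k y) (x₀ : X) :
    Summable fun y : {y : X // y ≠ x₀} => k x₀ y * k y x₀ :=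
  (hsum₂ x₀).of_nonneg_of_le (fun y => mul_nonneg (hnn x₀ y (Ne.symm y.2)) (hnn y x₀ y.2))
    fun y => mul_le_mul_of_nonneg_left (le_M1fn hnn hsum y.2) (hnn x₀ y (Ne.symm y.2))

variable [DecidableEq X] (x₀ : X) (c : ℝ)

lemma bddFun_single : BddFun (Pi.single x₀ c : X → ℝ) := by
  refine ⟨|c|, fun y => ?_⟩
  rcases eq_or_ne y x₀ with rfl | hy
  · simp
  · simp [Pi.single_eq_of_ne hy]

lemma genOp_single_self : genOp k (Pi.single x₀ c) x₀ = -(c * M1fn k x₀) := by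
  rw [genOp, tsum_eq_tsum_ne_of_eq_zero (x₀ := x₀) (by simp), M1fn, ← neg_mul, ← tsum_mul_left]
  refine tsum_congr fun y => ?_
  rw [Pi.single_eq_of_ne y.2, Pi.single_eq_same]
  ring

lemma genOp_single_of_ne {y : X} (hy : y ≠ x₀) :
    genOp k (Pi.single x₀ c) y = c * k y x₀ := by
  rw [genOp, tsum_eq_single x₀ fun z hz => by simp [Pi.single_eq_of_ne hz, Pi.single_eq_of_ne hy]]
  simp [Pi.single_eq_of_ne hy, mul_comm]

lemma psiUps_single_self : psiUps k (Pi.single x₀ c) x₀ = Ups (-c) * M1fn k x₀ := by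
  rw [psiUps, tsum_eq_tsum_ne_of_eq_zero (x₀ := x₀) (by simp [Ups_zero]), M1fn, ← tsum_mul_left]
  refine tsum_congr fun y => ?_
  rw [Pi.single_eq_of_ne y.2, Pi.single_eq_same, zero_sub, mul_comm]

lemma psiUps_single_of_ne {y : X} (hy : y ≠ x₀) :
    psiUps k (Pi.single x₀ c) y = Ups c * k y x₀ := by
  rw [psiUps, tsum_eq_single x₀ fun z hz => by
    simp [Pi.single_eq_of_ne hz, Pi.single_eq_of_ne hy, Ups_zero]]
  simp [Pi.single_eq_of_ne hy, mul_comm]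

variable {x₀}

lemma genOp_psiUps_single_self (hk : Summable fun y : {y : X // y ≠ x₀} => k x₀ y)
    (hkk : Summable fun y : {y : X // y ≠ x₀} => k x₀ y * k y x₀) :
    genOp k (psiUps k (Pi.single x₀ c)) x₀ = Ups c * Nfn k x₀ - Ups (-c) * M1fn k x₀ ^ 2 := by
  have hterm : ∀ y : {y : X // y ≠ x₀},
      k x₀ y * (psiUps k (Pi.single x₀ c) y - psiUps k (Pi.single x₀ c) x₀) =
        Ups c * (k x₀ y * k y x₀) - Ups (-c) * M1fn k x₀ * k x₀ y := fun y => by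
    rw [psiUps_single_of_ne x₀ c y.2, psiUps_single_self]
    ring
  rw [genOp, tsum_eq_tsum_ne_of_eq_zero (x₀ := x₀) (by simp), tsum_congr hterm,
    (hkk.mul_left _).tsum_sub (hk.mul_left _), tsum_mul_left, tsum_mul_left, Nfn, ← M1fn]
  ring

lemma bUps_single_self (hk : Summable fun y : {y : X // y ≠ x₀} => k x₀ y)
    (hkk : Summable fun y : {y : X // y ≠ x₀} => k x₀ y * k y x₀) :
    bUps k (Pi.single x₀ c) (genOp k (Pi.single x₀ c)) x₀ =
      (exp (-c) - 1) * c * (Nfn k x₀ + M1fn k x₀ ^ 2) := by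
  have hterm : ∀ y : {y : X // y ≠ x₀},
      k x₀ y * (exp ((Pi.single x₀ c : X → ℝ) y - (Pi.single x₀ c : X → ℝ) x₀) - 1) *
          (genOp k (Pi.single x₀ c) y - genOp k (Pi.single x₀ c) x₀) =
        (exp (-c) - 1) * c * (k x₀ y * k y x₀) + (exp (-c) - 1) * c * M1fn k x₀ * k x₀ y :=
    fun y => by
      rw [Pi.single_eq_of_ne y.2, Pi.single_eq_same, genOp_single_of_ne x₀ c y.2,
        genOp_single_self, zero_sub]
      ring
  rw [bUps, tsum_eq_tsum_ne_of_eq_zero (x₀ := x₀) (by simp), tsum_congr hterm,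
    (hkk.mul_left _).tsum_add (hk.mul_left _), tsum_mul_left, tsum_mul_left, Nfn, ← M1fn]
  ring

lemma psi2Ups_single_self (hk : Summable fun y : {y : X // y ≠ x₀} => k x₀ y)
    (hkk : Summable fun y : {y : X // y ≠ x₀} => k x₀ y * k y x₀) :
    psi2Ups k (Pi.single x₀ c) x₀ = ((exp c - 1 - c * exp (-c)) * Nfn k x₀ -
      ((1 + c) * exp (-c) - 1) * M1fn k x₀ ^ 2) / 2 := by
  rw [psi2Ups, genOp_psiUps_single_self c hk hkk, bUps_single_self c hk hkk, Ups, Ups]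
  ring

end Bump

lemma sq_M1fn_le_Nfn_of_cdUpsAt {X : Type*} {k : X → X → ℝ}
    (hnn : ∀ x y, x ≠ y → 0 ≤ k x y)
    (hsum : ∀ x : X, Summable fun y : {y : X // y ≠ x} => k x y)
    (hsum₂ : ∀ x : X, Summable fun y : {y : X // y ≠ x} => k x y * M1fn k y)
    {x₀ : X} {n : ℝ} (hn : 0 < n) (hCD : CDUpsAt k 0 (fun r => r ^ 2 / n) x₀) :
    3 * M1fn k x₀ ^ 2 ≤ (exp √(2 * n) - 1 - √(2 * n) * exp (-√(2 * n))) * Nfn k x₀ := by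
  classical
  set c := √(2 * n)
  have hc : 0 ≤ c := sqrt_nonneg _
  have hc₂ : c ^ 2 = 2 * n := sq_sqrt (by positivity)
  have hM := M1fn_nonneg hnn x₀
  have hCDc := hCD (Pi.single x₀ c) (bddFun_single x₀ c)
  rw [zero_mul, zero_add, genOp_single_self, neg_neg, trivExt, if_pos (mul_nonneg hc hM),
    psi2Ups_single_self c (hsum x₀) (summable_mul_swap hnn hsum hsum₂ x₀), mul_pow, hc₂,
    mul_div_right_comm, mul_div_cancel_right₀ _ hn.ne'] at hCDc
  linarith [mul_nonneg (mul_nonneg (by positivity : (0 : ℝ) ≤ 1 + c) (exp_pos (-c)).le)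
    (sq_nonneg (M1fn k x₀))]

theorem stmt_9_general {X : Type*} (k : X → X → ℝ) (hk : KernelSetting k)
    (x : ℕ → X) (hpos : ∀ m, 0 < M1fn k (x m))
    (hlim : Tendsto (fun m => Nfn k (x m) / (M1fn k (x m)) ^ 2) atTop (nhds 0)) :
    ¬ ∃ n : ℝ, 1 ≤ n ∧ CDUps k 0 (fun r => r ^ 2 / n) := by
  rintro ⟨n, hn, hCD⟩
  obtain ⟨hnn, hsum, -, hsum₂⟩ := hk
  have hn₀ : 0 < n := one_pos.trans_le hn
  set a := exp √(2 * n) - 1 - √(2 * n) * exp (-√(2 * n))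
  have ha : 0 < a := exp_sub_one_sub_mul_exp_neg_pos (sqrt_pos.mpr (by positivity))
  have hbound : ∀ m, 3 / a ≤ Nfn k (x m) / M1fn k (x m) ^ 2 := fun m => by
    rw [div_le_div_iff₀ ha (pow_pos (hpos m) 2)]
    linarith [sq_M1fn_le_Nfn_of_cdUpsAt hnn hsum hsum₂ hn₀ (hCD (x m))]
  obtain ⟨m, hm⟩ := (hlim.eventually (gt_mem_nhds (by positivity : (0 : ℝ) < 3 / a))).exists
  exact (hbound m).not_gt hm

/-- Proposition 2.12: if `N(x_m)/M₁(x_m)² → 0` along a sequence, then `CD_Υ(0,n)`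
fails for every finite `n`. -/
theorem stmt_9 {X : Type*} [Countable X] (k : X → X → ℝ) (hk : KernelSetting k)
    (x : ℕ → X) (hpos : ∀ m, 0 < M1fn k (x m))
    (hlim : Tendsto (fun m => Nfn k (x m) / (M1fn k (x m)) ^ 2) atTop (nhds 0)) :
    ¬ ∃ n : ℝ, 1 ≤ n ∧ CDUps k 0 (fun r => r ^ 2 / n) :=
  stmt_9_general k hk x hpos hlim
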